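/- Let K be a field of characteristic 0 and let P, Q ∈ K[x,y] be polynomials with Q(0,0) ≠ 0 and deg_y Q > 0, and let F = P/Q ∈ K(x,y). Let Q⋆ be a squarefree part of Q. Then for every natural number n there exists a polynomial A_n ∈ K[x,y] such that the n-th partial derivative of F with respect to y equals A_n / (Q·(Q⋆)^n), and bideg A_n ≤ bideg P + n·(deg_x Q⋆, deg_y Q⋆ − 1) (componentwise). -/

import Mathlib

open Polynomial PowerSeries

/-- `Qs` is a squarefree part of `Q`. -/
def IsSquarefreePart {R : Type*} [CommRing R] (Q Qs : R) : Prop :=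
  ∃ (m : ℕ) (f : Fin m → R),
    (∀ i, Squarefree (f i)) ∧
    (∀ i j, i ≠ j → IsRelPrime (f i) (f j)) ∧
    Q = ∏ i, f i ^ ((i : ℕ) + 1) ∧
    Qs = ∏ i, f i

/-- `deg_x` of a bivariate polynomial in `K[x][y]` (inner variable `x`). -/
noncomputable def degX {K : Type*} [Field K] (P : Polynomial (Polynomial K)) : ℕ :=
  P.support.sup fun j => (P.coeff j).natDegree

/-- A bivariate polynomial `Q ∈ K[x][y]` viewed as an element of `K(x)[[y]]`. -/
noncomputable def toSeries {K : Type*} [Field K] (Q : Polynomial (Polynomial K)) :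
    PowerSeries (RatFunc K) :=
  ↑(Q.map (algebraMap (Polynomial K) (RatFunc K)))

/-!
Write `Q = ∏ fᵢ ^ (i + 1)` and `Qs = ∏ fᵢ`. The logarithmic derivative `Q' / Q = ∑ (i + 1) fᵢ' / fᵢ`
equals `B / Qs` for a polynomial `B` with `bideg B ≤ bideg Qs - (0, 1)`. Hence, more generally,
`(Q Qsᵏ)' Qs = Q Qsᵏ (B + k Qs')`, so if `∂ᵏF = A / (Q Qsᵏ)` then
`∂ᵏ⁺¹F = (A' Qs - A (B + k Qs')) / (Q Qsᵏ⁺¹)`, and each step raises the bidegree of the numerator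
by at most `(deg_x Qs, deg_y Qs - 1)`. Derivatives are taken in `K(x)[[y]]`, where `Q` and `Qs`
are invertible because `Q(x, 0) ≠ 0`.
-/

open Polynomial.Bivariate

theorem PowerSeries.derivative_mul_inv_eq {R : Type*} [Field R] {a g s c : R⟦X⟧}
    (hg : constantCoeff g ≠ 0) (hs : constantCoeff s ≠ 0) (h : d⁄dX R g * s = g * c) :
    d⁄dX R (a * g⁻¹) = (d⁄dX R a * s - a * c) * (g * s)⁻¹ := by
  have hgg := PowerSeries.mul_inv_cancel g hg
  have hss := PowerSeries.mul_inv_cancel s hs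
  rw [Derivation.leibniz, derivative_inv', PowerSeries.mul_inv_rev, smul_eq_mul, smul_eq_mul]
  linear_combination (-g⁻¹ * d⁄dX R a + a * g⁻¹ ^ 2 * d⁄dX R g) * hss
    - a * g⁻¹ ^ 2 * s⁻¹ * h - a * g⁻¹ * c * s⁻¹ * hgg

theorem Polynomial.natDegree_derivative_mul_le {R : Type*} [CommRing R] [IsDomain R]
    (p q : R[X]) : (derivative p * q).natDegree ≤ (p * q).natDegree - 1 := by
  rcases eq_or_ne p 0 with rfl | hp
  · simp
  rcases eq_or_ne q 0 with rfl | hq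
  · simp
  rcases Nat.eq_zero_or_pos p.natDegree with hp0 | hp0
  · simp [derivative_of_natDegree_zero hp0]
  rw [natDegree_mul hp hq]
  have := natDegree_derivative_le p
  have := natDegree_mul_le (p := derivative p) (q := q)
  omega

theorem Polynomial.natDegree_derivative_mul_sub_mul_le {R : Type*} [CommRing R] [IsDomain R]
    (a s c : R[X]) (hc : c.natDegree ≤ s.natDegree - 1) :
    (derivative a * s - a * c).natDegree ≤ a.natDegree + (s.natDegree - 1) := by
  have has := natDegree_mul_le (p := a) (q := s)
  refine (natDegree_sub_le _ _).trans <| max_le ?_ (natDegree_mul_le.trans (by omega))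
  exact (natDegree_derivative_mul_le a s).trans (by omega)

theorem Polynomial.derivative_prod_pow_succ_mul_prod {R ι : Type*} [CommSemiring R]
    [DecidableEq ι] (s : Finset ι) (f : ι → R[X]) (e : ι → ℕ) :
    derivative (∏ i ∈ s, f i ^ (e i + 1)) * ∏ i ∈ s, f i =
      (∏ i ∈ s, f i ^ (e i + 1)) *
        ∑ i ∈ s, (e i + 1) • (derivative (f i) * ∏ j ∈ s.erase i, f j) := by
  rw [derivative_prod_finset, Finset.sum_mul, Finset.mul_sum]
  refine Finset.sum_congr rfl fun i hi => ?_
  rw [← Finset.mul_prod_erase s f hi, ← Finset.mul_prod_erase s (fun i => f i ^ (e i + 1)) hi,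
    derivative_pow_succ, nsmul_eq_mul]
  simp only [map_add, map_natCast, map_one, Nat.cast_add, Nat.cast_one]
  ring

section DegX

variable {K : Type*} [Field K]

theorem coeff_coeff_swap (P : K[X][X]) (i j : ℕ) :
    ((swap P).coeff i).coeff j = (P.coeff j).coeff i := by
  induction P using Polynomial.induction_on' with
  | add p q hp hq => simp only [map_add, coeff_add, hp, hq]
  | monomial n f =>
    induction f using Polynomial.induction_on' with
    | add f g hf hg => simp only [map_add, coeff_add, hf, hg]
    | monomial m r =>
      rw [swap_monomial_monomial]
      simp only [Polynomial.coeff_monomial]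
      split_ifs <;> simp_all [Polynomial.coeff_monomial]

theorem natDegree_coeff_le_degX (P : K[X][X]) (j : ℕ) : (P.coeff j).natDegree ≤ degX P := by
  by_cases hj : j ∈ P.support
  · exact Finset.le_sup (f := fun j => (P.coeff j).natDegree) hj
  · simp [notMem_support_iff.mp hj]

theorem degX_le_iff {P : K[X][X]} {d : ℕ} : degX P ≤ d ↔ ∀ j, (P.coeff j).natDegree ≤ d :=
  ⟨fun h j => (natDegree_coeff_le_degX P j).trans h, fun h => Finset.sup_le fun j _ => h j⟩

theorem natDegree_swap (P : K[X][X]) : (swap P).natDegree = degX P := by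
  apply le_antisymm
  · refine natDegree_le_iff_coeff_eq_zero.mpr fun i hi => Polynomial.ext fun j => ?_
    rw [coeff_coeff_swap, coeff_zero]
    exact coeff_eq_zero_of_natDegree_lt ((natDegree_coeff_le_degX P j).trans_lt hi)
  · refine degX_le_iff.mpr fun j => natDegree_le_iff_coeff_eq_zero.mpr fun i hi => ?_
    rw [← coeff_coeff_swap, coeff_eq_zero_of_natDegree_lt hi, coeff_zero]

theorem degX_mul_le (p q : K[X][X]) : degX (p * q) ≤ degX p + degX q := by
  simpa only [← natDegree_swap, map_mul] using natDegree_mul_le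

theorem degX_mul {p q : K[X][X]} (hp : p ≠ 0) (hq : q ≠ 0) : degX (p * q) = degX p + degX q := by
  simpa only [← natDegree_swap, map_mul] using
    natDegree_mul (swap.injective.ne hp |>.trans_eq (map_zero _))
      (swap.injective.ne hq |>.trans_eq (map_zero _))

theorem degX_add_le (p q : K[X][X]) : degX (p + q) ≤ max (degX p) (degX q) := by
  simpa only [← natDegree_swap, map_add] using natDegree_add_le _ _

theorem degX_sub_le (p q : K[X][X]) : degX (p - q) ≤ max (degX p) (degX q) := by
  simpa only [← natDegree_swap, map_sub] using natDegree_sub_le _ _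

theorem degX_nsmul_le (n : ℕ) (p : K[X][X]) : degX (n • p) ≤ degX p := by
  simpa only [← natDegree_swap, map_nsmul] using natDegree_smul_le _ _

theorem degX_sum_le {ι : Type*} (s : Finset ι) (f : ι → K[X][X]) {d : ℕ}
    (h : ∀ i ∈ s, degX (f i) ≤ d) : degX (∑ i ∈ s, f i) ≤ d := by
  simpa only [← natDegree_swap, map_sum] using
    natDegree_sum_le_of_forall_le _ _ (by simpa only [natDegree_swap] using h)

theorem degX_derivative_le (p : K[X][X]) : degX (derivative p) ≤ degX p :=
  degX_le_iff.mpr fun j => by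
    rw [Polynomial.coeff_derivative, ← Nat.cast_add_one, ← map_natCast Polynomial.C]
    exact (natDegree_mul_C_le _ _).trans (natDegree_coeff_le_degX p (j + 1))

theorem degX_derivative_mul_le (p q : K[X][X]) : degX (derivative p * q) ≤ degX (p * q) := by
  rcases eq_or_ne p 0 with rfl | hp
  · simp
  rcases eq_or_ne q 0 with rfl | hq
  · simp
  rw [degX_mul hp hq]
  exact (degX_mul_le _ _).trans (Nat.add_le_add_right (degX_derivative_le p) _)

theorem degX_derivative_mul_sub_mul_le (a s c : K[X][X]) (hc : degX c ≤ degX s) :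
    degX (derivative a * s - a * c) ≤ degX a + degX s :=
  (degX_sub_le _ _).trans <| max_le ((degX_derivative_mul_le a s).trans (degX_mul_le a s))
    ((degX_mul_le a c).trans (Nat.add_le_add_left hc _))

theorem exists_derivative_mul_pow_mul_eq {g s c : K[X][X]} (h : derivative g * s = g * c)
    (hx : degX c ≤ degX s) (hy : c.natDegree ≤ s.natDegree - 1) (k : ℕ) :
    ∃ c', derivative (g * s ^ k) * s = g * s ^ k * c' ∧
      degX c' ≤ degX s ∧ c'.natDegree ≤ s.natDegree - 1 := by
  induction k with
  | zero => exact ⟨c, by simpa using h, hx, hy⟩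
  | succ k ih =>
    obtain ⟨c', hc', hx', hy'⟩ := ih
    refine ⟨c' + derivative s, ?_, (degX_add_le _ _).trans (max_le hx' (degX_derivative_le s)),
      (natDegree_add_le _ _).trans (max_le hy' (natDegree_derivative_le s))⟩
    rw [pow_succ, ← mul_assoc, derivative_mul]
    linear_combination s * hc'

end DegX

namespace IsSquarefreePart

theorem dvd {R : Type*} [CommRing R] {Q Qs : R} (h : IsSquarefreePart Q Qs) : Qs ∣ Q := by
  obtain ⟨m, f, -, -, rfl, rfl⟩ := h
  exact Finset.prod_dvd_prod_of_dvd _ _ fun i _ => dvd_pow_self _ (Nat.succ_ne_zero _)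

theorem exists_dvd_pow {R : Type*} [CommRing R] {Q Qs : R} (h : IsSquarefreePart Q Qs) :
    ∃ m : ℕ, Q ∣ Qs ^ m := by
  obtain ⟨m, f, -, -, rfl, rfl⟩ := h
  refine ⟨m, ?_⟩
  rw [← Finset.prod_pow]
  exact Finset.prod_dvd_prod_of_dvd _ _ fun i _ => pow_dvd_pow _ i.isLt

theorem natDegree_pos {R : Type*} [CommRing R] [IsDomain R] {Q Qs : R[X]}
    (h : IsSquarefreePart Q Qs) (hQ : 0 < Q.natDegree) : 0 < Qs.natDegree := by
  obtain ⟨m, hm⟩ := h.exists_dvd_pow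
  have hQs : Qs ≠ 0 := fun h0 => (ne_zero_of_natDegree_gt hQ) (zero_dvd_iff.mp (h0 ▸ h.dvd))
  have hdeg := natDegree_le_of_dvd hm (pow_ne_zero m hQs)
  refine Nat.pos_of_ne_zero fun h0 => ?_
  rw [natDegree_pow, h0, mul_zero] at hdeg
  omega

theorem exists_derivative_mul_eq {K : Type*} [Field K] {Q Qs : K[X][X]}
    (h : IsSquarefreePart Q Qs) :
    ∃ B, derivative Q * Qs = Q * B ∧ degX B ≤ degX Qs ∧ B.natDegree ≤ Qs.natDegree - 1 := by
  classical
  obtain ⟨m, f, -, -, rfl, rfl⟩ := h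
  refine ⟨_, derivative_prod_pow_succ_mul_prod Finset.univ f (fun i => i),
    degX_sum_le _ _ fun i _ => ?_, natDegree_sum_le_of_forall_le _ _ fun i _ => ?_⟩
  · rw [← Finset.mul_prod_erase _ f (Finset.mem_univ i)]
    exact (degX_nsmul_le _ _).trans (degX_derivative_mul_le _ _)
  · rw [← Finset.mul_prod_erase _ f (Finset.mem_univ i)]
    exact (natDegree_smul_le _ _).trans (natDegree_derivative_mul_le _ _)

end IsSquarefreePart

section Series

variable {K : Type*} [Field K]

theorem toSeries_mul (p q : K[X][X]) : toSeries (p * q) = toSeries p * toSeries q := by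
  simp only [toSeries, Polynomial.map_mul, Polynomial.coe_mul]

theorem toSeries_sub (p q : K[X][X]) : toSeries (p - q) = toSeries p - toSeries q := by
  simp only [toSeries, Polynomial.map_sub, Polynomial.coe_sub]

theorem toSeries_pow (p : K[X][X]) (n : ℕ) : toSeries (p ^ n) = toSeries p ^ n := by
  simp only [toSeries, Polynomial.map_pow, Polynomial.coe_pow]

theorem derivative_toSeries (p : K[X][X]) :
    d⁄dX (RatFunc K) (toSeries p) = toSeries (derivative p) := by
  rw [toSeries, toSeries, derivative_coe, derivative_map]

theorem constantCoeff_toSeries_ne_zero {p : K[X][X]} (hp : p.eval 0 ≠ 0) :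
    constantCoeff (toSeries p) ≠ 0 := by
  rw [toSeries, ← PowerSeries.coeff_zero_eq_constantCoeff_apply, Polynomial.coeff_coe,
    Polynomial.coeff_map, coeff_zero_eq_eval_zero]
  exact (map_ne_zero_iff _ (RatFunc.algebraMap_injective K)).mpr hp

theorem exists_iterate_derivative_toSeries_mul_inv {Q Qs B : K[X][X]} (P : K[X][X])
    (hQ : Q.eval 0 ≠ 0) (hQs : Qs.eval 0 ≠ 0) (hB : derivative Q * Qs = Q * B)
    (hBx : degX B ≤ degX Qs) (hBy : B.natDegree ≤ Qs.natDegree - 1) (n : ℕ) :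
    ∃ A, (d⁄dX (RatFunc K))^[n] (toSeries P * (toSeries Q)⁻¹) =
        toSeries A * (toSeries (Q * Qs ^ n))⁻¹ ∧
      degX A ≤ degX P + n * degX Qs ∧ A.natDegree ≤ P.natDegree + n * (Qs.natDegree - 1) := by
  induction n with
  | zero => exact ⟨P, by simp, by simp, by simp⟩
  | succ k ih =>
    obtain ⟨A, hA, hAx, hAy⟩ := ih
    obtain ⟨c, hc, hcx, hcy⟩ := exists_derivative_mul_pow_mul_eq hB hBx hBy k
    have hQQs : (Q * Qs ^ k).eval 0 ≠ 0 := by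
      rw [eval_mul, eval_pow]
      exact mul_ne_zero hQ (pow_ne_zero k hQs)
    refine ⟨derivative A * Qs - A * c, ?_, ?_, ?_⟩
    · rw [Function.iterate_succ_apply', hA,
        derivative_mul_inv_eq (constantCoeff_toSeries_ne_zero hQQs)
          (constantCoeff_toSeries_ne_zero hQs)
          (by rw [derivative_toSeries, ← toSeries_mul, ← toSeries_mul, hc]),
        derivative_toSeries, ← toSeries_mul, ← toSeries_mul, ← toSeries_sub, ← toSeries_mul,
        pow_succ, mul_assoc]
    · have := degX_derivative_mul_sub_mul_le A Qs c hcx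
      linarith
    · have := natDegree_derivative_mul_sub_mul_le A Qs c hcy
      linarith

end Series

theorem iterated_derivative_rational_function_general (K : Type*) [Field K]
    (P Q Qs : Polynomial (Polynomial K))
    (hQ00 : (Q.eval 0).eval 0 ≠ 0) (hdegy : 0 < Q.natDegree)
    (hsf : IsSquarefreePart Q Qs) (n : ℕ) :
    ∃ A : Polynomial (Polynomial K),
      (PowerSeries.derivativeFun)^[n] (toSeries P * (toSeries Q)⁻¹) =
        toSeries A * (toSeries Q * (toSeries Qs) ^ n)⁻¹ ∧
      (degX A : ℤ) ≤ degX P + n * degX Qs ∧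
      (A.natDegree : ℤ) ≤ P.natDegree + n * ((Qs.natDegree : ℤ) - 1) := by
  have hQ : Q.eval 0 ≠ 0 := fun h => hQ00 (by rw [h, eval_zero])
  have hQs : Qs.eval 0 ≠ 0 := fun h => hQ (eval_eq_zero_of_dvd_of_eval_eq_zero hsf.dvd h)
  obtain ⟨B, hB, hBx, hBy⟩ := hsf.exists_derivative_mul_eq
  obtain ⟨A, hA, hAx, hAy⟩ := exists_iterate_derivative_toSeries_mul_inv P hQ hQs hB hBx hBy n
  refine ⟨A, by rwa [toSeries_mul, toSeries_pow] at hA, by exact_mod_cast hAx, ?_⟩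
  zify [hsf.natDegree_pos hdegy] at hAy
  exact hAy

theorem iterated_derivative_rational_function (K : Type*) [Field K] [CharZero K]
    (P Q Qs : Polynomial (Polynomial K))
    (hQ00 : (Q.eval 0).eval 0 ≠ 0) (hdegy : 0 < Q.natDegree)
    (hsf : IsSquarefreePart Q Qs) (n : ℕ) :
    ∃ A : Polynomial (Polynomial K),
      (PowerSeries.derivativeFun)^[n] (toSeries P * (toSeries Q)⁻¹) =
        toSeries A * (toSeries Q * (toSeries Qs) ^ n)⁻¹ ∧
      (degX A : ℤ) ≤ degX P + n * degX Qs ∧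
      (A.natDegree : ℤ) ≤ P.natDegree + n * ((Qs.natDegree : ℤ) - 1) :=
  iterated_derivative_rational_function_general K P Q Qs hQ00 hdegy hsf n
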